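/- Suppose the 8-tuple (A₁₁, A₁₂, A₂₁, A₂₂, x̄₁, x̄₂, x₁*, x₂*) satisfies the system (S) and additionally A₂₁ > 0 and A₂₂ < 0, and let Γ₂(y) = Ṽ₂(y) + λy. Then: (a) Γ₂(y) < Γ₂(x₂*) for every y ≠ x₂* (so x₂* is the unique global maximizer of Γ₂ on ℝ); (b) for every x ≤ x₂*, sup_{y ≤ x} Γ₂(y) = Γ₂(x). Consequently, for x ≥ x₂* the unique maximizer of y ↦ Ṽ₂(y) − c − λ(x − y) over y ≤ x is y = x₂*, while for x ≤ x₂* its supremum over y ≤ x equals Ṽ₂(x) − c. -/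

import Mathlib

/-!
With `u = e^{θy}`, `(φ₂' + λ) e^{θy} = A₂₁θu² + (λ − 1/ρ)u − A₂₂θ` is a quadratic in `u` with
positive leading coefficient, and the smooth-fit conditions `φ₂'(x₂*) = φ₂'(x̄₂) = −λ` say that its
roots are `e^{θx₂*}` and `e^{θx̄₂}`. Hence `φ₂ + λ·id` increases strictly up to `x₂*` and decreases
strictly on `[x₂*, x̄₂]`. Now `Γ₂` equals `φ₂ + λ·id` on `[x̄₁, x̄₂)` (at `x̄₁` by continuity of
`Ṽ₂`), has slope `λ − λ̃ ≥ 0` left of `x̄₁`, and is constant equal to `Γ₂(x₂*) − c` right of `x̄₂`.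
-/

open Real Filter Set

/-- `φ₁(x) = A₁₁ e^{θx} + A₁₂ e^{−θx} + (x − s₁)/ρ`. -/
noncomputable def phi1 (ρ θ s1 A11 A12 : ℝ) : ℝ → ℝ :=
  fun x => A11 * Real.exp (θ * x) + A12 * Real.exp (-(θ * x)) + (x - s1) / ρ

/-- `φ₂(x) = A₂₁ e^{θx} + A₂₂ e^{−θx} + (s₂ − x)/ρ`. -/
noncomputable def phi2 (ρ θ s2 A21 A22 : ℝ) : ℝ → ℝ :=
  fun x => A21 * Real.exp (θ * x) + A22 * Real.exp (-(θ * x)) + (s2 - x) / ρ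

/-- The system (S): order conditions together with the ten equations, where
`θ = √(2ρ/σ²)`. -/
def SystemS (ρ σ lam lamt c ct s1 s2 A11 A12 A21 A22 xb1 xb2 xs1 xs2 : ℝ) : Prop :=
  xb1 < xs1 ∧ xs1 < xb2 ∧ xb1 < xs2 ∧ xs2 < xb2 ∧
  deriv (phi1 ρ (Real.sqrt (2 * ρ / σ ^ 2)) s1 A11 A12) xs1 = lam ∧
  deriv (deriv (phi1 ρ (Real.sqrt (2 * ρ / σ ^ 2)) s1 A11 A12)) xs1 ≤ 0 ∧
  deriv (phi1 ρ (Real.sqrt (2 * ρ / σ ^ 2)) s1 A11 A12) xb1 = lam ∧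
  phi1 ρ (Real.sqrt (2 * ρ / σ ^ 2)) s1 A11 A12 xb1
    = phi1 ρ (Real.sqrt (2 * ρ / σ ^ 2)) s1 A11 A12 xs1 - c - lam * (xs1 - xb1) ∧
  phi1 ρ (Real.sqrt (2 * ρ / σ ^ 2)) s1 A11 A12 xb2
    = phi1 ρ (Real.sqrt (2 * ρ / σ ^ 2)) s1 A11 A12 xs2 + ct + lamt * (xb2 - xs2) ∧
  deriv (phi2 ρ (Real.sqrt (2 * ρ / σ ^ 2)) s2 A21 A22) xs2 = -lam ∧
  deriv (deriv (phi2 ρ (Real.sqrt (2 * ρ / σ ^ 2)) s2 A21 A22)) xs2 ≤ 0 ∧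
  deriv (phi2 ρ (Real.sqrt (2 * ρ / σ ^ 2)) s2 A21 A22) xb2 = -lam ∧
  phi2 ρ (Real.sqrt (2 * ρ / σ ^ 2)) s2 A21 A22 xb1
    = phi2 ρ (Real.sqrt (2 * ρ / σ ^ 2)) s2 A21 A22 xs1 + ct + lamt * (xs1 - xb1) ∧
  phi2 ρ (Real.sqrt (2 * ρ / σ ^ 2)) s2 A21 A22 xb2
    = phi2 ρ (Real.sqrt (2 * ρ / σ ^ 2)) s2 A21 A22 xs2 - c - lam * (xb2 - xs2)

/-- The candidate value function `Ṽ₂`, defined piecewise from `φ₂` with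
`θ = √(2ρ/σ²)`. -/
noncomputable def V2t (ρ σ lam lamt c ct s2 A21 A22 xb1 xb2 xs1 xs2 : ℝ) : ℝ → ℝ :=
  fun x =>
    if x ≤ xb1 then
      phi2 ρ (Real.sqrt (2 * ρ / σ ^ 2)) s2 A21 A22 xs1 + ct + lamt * (xs1 - x)
    else if x < xb2 then
      phi2 ρ (Real.sqrt (2 * ρ / σ ^ 2)) s2 A21 A22 x
    else
      phi2 ρ (Real.sqrt (2 * ρ / σ ^ 2)) s2 A21 A22 xs2 - c - lam * (x - xs2)



theorem hasDerivAt_phi2 (ρ θ s2 A21 A22 y : ℝ) :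
    HasDerivAt (phi2 ρ θ s2 A21 A22)
      (A21 * θ * exp (θ * y) - A22 * θ * exp (-(θ * y)) - 1 / ρ) y := by
  have hlin : HasDerivAt (fun x => θ * x) θ y := by
    simpa using (hasDerivAt_id y).const_mul θ
  have hneg : HasDerivAt (fun x => -(θ * x)) (-θ) y := hlin.neg
  refine HasDerivAt.congr_deriv (f := phi2 ρ θ s2 A21 A22)
    (((hlin.exp.const_mul A21).add (hneg.exp.const_mul A22)).add
      (((hasDerivAt_id y).const_sub s2).div_const ρ)) ?_
  ring

theorem quadratic_eq_mul_sub_mul_sub {α β γ p q : ℝ} (hpq : p ≠ q)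
    (hp : α * p ^ 2 + β * p + γ = 0) (hq : α * q ^ 2 + β * q + γ = 0) (u : ℝ) :
    α * u ^ 2 + β * u + γ = α * (u - p) * (u - q) := by
  have hβ : β = -(α * (p + q)) := by
    have : (p - q) * (α * (p + q) + β) = 0 := by linear_combination hp - hq
    linear_combination (mul_eq_zero.1 this).resolve_left (sub_ne_zero.2 hpq)
  have hγ : γ = α * p * q := by linear_combination hp - p * hβ
  rw [hβ, hγ]
  ring

section Phi2AddLinear

variable {ρ θ s2 A21 A22 lam a b : ℝ}

theorem hasDerivAt_phi2_add_mul (y : ℝ) :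
    HasDerivAt (fun x => phi2 ρ θ s2 A21 A22 x + lam * x)
      (deriv (phi2 ρ θ s2 A21 A22) y + lam) y := by
  rw [(hasDerivAt_phi2 ρ θ s2 A21 A22 y).deriv]
  exact ((hasDerivAt_phi2 ρ θ s2 A21 A22 y).add ((hasDerivAt_id' y).const_mul lam)).congr_deriv
    (by ring)

theorem deriv_phi2_add_mul_exp_eq (hθ : 0 < θ) (hab : a < b)
    (ha : deriv (phi2 ρ θ s2 A21 A22) a = -lam) (hb : deriv (phi2 ρ θ s2 A21 A22) b = -lam)
    (y : ℝ) :
    (deriv (phi2 ρ θ s2 A21 A22) y + lam) * exp (θ * y)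
      = A21 * θ * (exp (θ * y) - exp (θ * a)) * (exp (θ * y) - exp (θ * b)) := by
  have hquad : ∀ x, (deriv (phi2 ρ θ s2 A21 A22) x + lam) * exp (θ * x)
      = A21 * θ * exp (θ * x) ^ 2 + (lam - 1 / ρ) * exp (θ * x) + -(A22 * θ) := by
    intro x
    have hinv : exp (-(θ * x)) * exp (θ * x) = 1 := by rw [← exp_add]; simp
    rw [(hasDerivAt_phi2 ρ θ s2 A21 A22 x).deriv]
    linear_combination -(A22 * θ) * hinv
  have hroot : ∀ x, deriv (phi2 ρ θ s2 A21 A22) x = -lam →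
      A21 * θ * exp (θ * x) ^ 2 + (lam - 1 / ρ) * exp (θ * x) + -(A22 * θ) = 0 := by
    intro x hx
    rw [← hquad, hx, neg_add_cancel, zero_mul]
  rw [hquad, quadratic_eq_mul_sub_mul_sub (exp_lt_exp.2 (by gcongr)).ne (hroot a ha) (hroot b hb)]

theorem strictMonoOn_phi2_add_mul_Iic (hθ : 0 < θ) (hA21 : 0 < A21) (hab : a < b)
    (ha : deriv (phi2 ρ θ s2 A21 A22) a = -lam) (hb : deriv (phi2 ρ θ s2 A21 A22) b = -lam) :
    StrictMonoOn (fun x => phi2 ρ θ s2 A21 A22 x + lam * x) (Iic a) := by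
  refine strictMonoOn_of_deriv_pos (convex_Iic a)
    (fun y _ => (hasDerivAt_phi2_add_mul y).continuousAt.continuousWithinAt) fun y hy => ?_
  rw [interior_Iic] at hy
  rw [(hasDerivAt_phi2_add_mul y).deriv]
  have hya : exp (θ * y) < exp (θ * a) := exp_lt_exp.2 (by gcongr; exact hy)
  have hyb : exp (θ * y) < exp (θ * b) := hya.trans (exp_lt_exp.2 (by gcongr))
  refine pos_of_mul_pos_left ?_ (exp_pos (θ * y)).le
  rw [deriv_phi2_add_mul_exp_eq hθ hab ha hb]
  exact mul_pos_of_neg_of_neg (mul_neg_of_pos_of_neg (by positivity) (sub_neg.2 hya))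
    (sub_neg.2 hyb)

theorem strictAntiOn_phi2_add_mul_Icc (hθ : 0 < θ) (hA21 : 0 < A21) (hab : a < b)
    (ha : deriv (phi2 ρ θ s2 A21 A22) a = -lam) (hb : deriv (phi2 ρ θ s2 A21 A22) b = -lam) :
    StrictAntiOn (fun x => phi2 ρ θ s2 A21 A22 x + lam * x) (Icc a b) := by
  refine strictAntiOn_of_deriv_neg (convex_Icc a b)
    (fun y _ => (hasDerivAt_phi2_add_mul y).continuousAt.continuousWithinAt) fun y hy => ?_
  rw [interior_Icc] at hy
  rw [(hasDerivAt_phi2_add_mul y).deriv]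
  have hay : exp (θ * a) < exp (θ * y) := exp_lt_exp.2 (by gcongr; exact hy.1)
  have hyb : exp (θ * y) < exp (θ * b) := exp_lt_exp.2 (by gcongr; exact hy.2)
  refine neg_of_mul_neg_left ?_ (exp_pos (θ * y)).le
  rw [deriv_phi2_add_mul_exp_eq hθ hab ha hb]
  exact mul_neg_of_pos_of_neg (mul_pos (by positivity) (sub_pos.2 hay)) (sub_neg.2 hyb)

end Phi2AddLinear

section CandidateValue

variable {ρ σ lam lamt c ct s2 A21 A22 xb1 xb2 xs1 xs2 y : ℝ}

local notation "Ṽ₂" => V2t ρ σ lam lamt c ct s2 A21 A22 xb1 xb2 xs1 xs2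
local notation "φ₂" => phi2 ρ (√(2 * ρ / σ ^ 2)) s2 A21 A22

theorem V2t_of_le_xb1 (hy : y ≤ xb1) : Ṽ₂ y = Ṽ₂ xb1 + lamt * (xb1 - y) := by
  simp only [V2t, if_pos hy, if_pos le_rfl]
  ring

theorem V2t_of_mem_Ioo (hy : y ∈ Ioo xb1 xb2) : Ṽ₂ y = φ₂ y := by
  simp only [V2t, if_neg (not_le.2 hy.1), if_pos hy.2]

theorem V2t_of_xb2_le (hb : xb1 < xb2) (hy : xb2 ≤ y) :
    Ṽ₂ y = φ₂ xs2 - c - lam * (y - xs2) := by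
  simp only [V2t, if_neg (not_le.2 (hb.trans_le hy)), if_neg (not_lt.2 hy)]

theorem V2t_eqOn_Ico (hcont : φ₂ xb1 = φ₂ xs1 + ct + lamt * (xs1 - xb1)) :
    EqOn Ṽ₂ φ₂ (Ico xb1 xb2) := by
  intro y hy
  rcases hy.1.eq_or_lt with rfl | hlt
  · simp only [V2t, if_pos le_rfl, hcont]
  · exact V2t_of_mem_Ioo ⟨hlt, hy.2⟩

theorem monotoneOn_V2t_add_mul (hθ : 0 < √(2 * ρ / σ ^ 2)) (hA21 : 0 < A21) (hlam : lamt ≤ lam)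
    (hxb1 : xb1 < xs2) (hxb2 : xs2 < xb2) (hd1 : deriv φ₂ xs2 = -lam) (hd2 : deriv φ₂ xb2 = -lam)
    (hcont : φ₂ xb1 = φ₂ xs1 + ct + lamt * (xs1 - xb1)) :
    MonotoneOn (fun y => Ṽ₂ y + lam * y) (Iic xs2) := by
  have hleft : MonotoneOn (fun y => Ṽ₂ y + lam * y) (Iic xb1) := by
    intro a ha b hb hab
    simp only [V2t_of_le_xb1 ha, V2t_of_le_xb1 hb]
    nlinarith [mul_nonneg (sub_nonneg.2 hlam) (sub_nonneg.2 hab)]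
  have hmid : MonotoneOn (fun y => Ṽ₂ y + lam * y) (Icc xb1 xs2) := by
    refine ((strictMonoOn_phi2_add_mul_Iic hθ hA21 hxb2 hd1 hd2).monotoneOn.mono
      Icc_subset_Iic_self).congr fun y hy => ?_
    simp only [V2t_eqOn_Ico hcont ⟨hy.1, hy.2.trans_lt hxb2⟩]
  rw [← Iic_union_Icc_eq_Iic hxb1.le]
  exact hleft.union_right hmid isGreatest_Iic (isLeast_Icc hxb1.le)

theorem V2t_add_mul_lt_of_ne (hθ : 0 < √(2 * ρ / σ ^ 2)) (hA21 : 0 < A21) (hlam : lamt ≤ lam)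
    (hc : 0 < c) (hxb1 : xb1 < xs2) (hxb2 : xs2 < xb2) (hd1 : deriv φ₂ xs2 = -lam)
    (hd2 : deriv φ₂ xb2 = -lam) (hcont : φ₂ xb1 = φ₂ xs1 + ct + lamt * (xs1 - xb1))
    (hy : y ≠ xs2) :
    Ṽ₂ y + lam * y < Ṽ₂ xs2 + lam * xs2 := by
  have hxs2 : Ṽ₂ xs2 = φ₂ xs2 := V2t_of_mem_Ioo ⟨hxb1, hxb2⟩
  rcases hy.lt_or_gt with hlt | hgt
  · set z := max y xb1
    have hz : z < xs2 := max_lt hlt hxb1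
    calc Ṽ₂ y + lam * y ≤ Ṽ₂ z + lam * z :=
          monotoneOn_V2t_add_mul hθ hA21 hlam hxb1 hxb2 hd1 hd2 hcont
            (hlt.le : y ∈ Iic xs2) (hz.le : z ∈ Iic xs2) (le_max_left y xb1)
      _ = φ₂ z + lam * z := by
          rw [V2t_eqOn_Ico hcont ⟨le_max_right y xb1, hz.trans hxb2⟩]
      _ < φ₂ xs2 + lam * xs2 :=
          strictMonoOn_phi2_add_mul_Iic hθ hA21 hxb2 hd1 hd2 (hz.le : z ∈ Iic xs2)
            (le_refl xs2 : xs2 ∈ Iic xs2) hz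
      _ = Ṽ₂ xs2 + lam * xs2 := by rw [hxs2]
  · rcases lt_or_ge y xb2 with hyb | hyb
    · rw [V2t_of_mem_Ioo ⟨hxb1.trans hgt, hyb⟩, hxs2]
      exact strictAntiOn_phi2_add_mul_Icc hθ hA21 hxb2 hd1 hd2 ⟨le_rfl, hxb2.le⟩ ⟨hgt.le, hyb.le⟩
        hgt
    · rw [V2t_of_xb2_le (hxb1.trans hxb2) hyb, hxs2]
      linarith

end CandidateValue

theorem csSup_image_Iic_of_monotoneOn {α β : Type*} [LinearOrder α]
    [ConditionallyCompleteLattice β] {f : α → β} {a x : α} (hf : MonotoneOn f (Iic a))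
    (hx : x ≤ a) : sSup (f '' Iic x) = f x :=
  ((hf.mono (Iic_subset_Iic.2 hx)).map_isGreatest isGreatest_Iic).csSup_eq

theorem stmt_9_general (ρ σ lam lamt c ct s1 s2 : ℝ) (hρ : 0 < ρ) (hσ : 0 < σ)
    (h2 : lamt ≤ lam)
    (h6 : 0 < c)
    (A11 A12 A21 A22 xb1 xb2 xs1 xs2 : ℝ)
    (hS : SystemS ρ σ lam lamt c ct s1 s2 A11 A12 A21 A22 xb1 xb2 xs1 xs2)
    (hA21 : 0 < A21)
    (Γ₂ : ℝ → ℝ)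
    (hΓ₂ : ∀ y : ℝ, Γ₂ y = V2t ρ σ lam lamt c ct s2 A21 A22 xb1 xb2 xs1 xs2 y
      + lam * y) :
    (∀ y : ℝ, y ≠ xs2 → Γ₂ y < Γ₂ xs2) ∧
    (∀ x : ℝ, x ≤ xs2 → sSup (Γ₂ '' Set.Iic x) = Γ₂ x) ∧
    (∀ x : ℝ, xs2 ≤ x → ∀ y : ℝ, y ≤ x → y ≠ xs2 →
      V2t ρ σ lam lamt c ct s2 A21 A22 xb1 xb2 xs1 xs2 y - c - lam * (x - y)
        < V2t ρ σ lam lamt c ct s2 A21 A22 xb1 xb2 xs1 xs2 xs2 - c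
          - lam * (x - xs2)) ∧
    (∀ x : ℝ, x ≤ xs2 →
      sSup ((fun y => V2t ρ σ lam lamt c ct s2 A21 A22 xb1 xb2 xs1 xs2 y - c
        - lam * (x - y)) '' Set.Iic x)
        = V2t ρ σ lam lamt c ct s2 A21 A22 xb1 xb2 xs1 xs2 x - c) := by
  obtain ⟨-, -, hxb1, hxb2, -, -, -, -, -, hd1, -, hd2, hcont, -⟩ := hS
  obtain rfl : Γ₂ = _ := funext hΓ₂
  have hθ : 0 < √(2 * ρ / σ ^ 2) := Real.sqrt_pos.2 (by positivity)
  have hmax := fun y => V2t_add_mul_lt_of_ne (y := y) hθ hA21 h2 h6 hxb1 hxb2 hd1 hd2 hcont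
  have hmono := monotoneOn_V2t_add_mul (c := c) hθ hA21 h2 hxb1 hxb2 hd1 hd2 hcont
  refine ⟨hmax, fun x hx => csSup_image_Iic_of_monotoneOn hmono hx,
    fun x _ y _ hy => by linarith [hmax y hy], fun x hx => ?_⟩
  have hmono' : MonotoneOn (fun y =>
      V2t ρ σ lam lamt c ct s2 A21 A22 xb1 xb2 xs1 xs2 y - c - lam * (x - y)) (Iic xs2) :=
    fun a ha b hb hab => by linarith [hmono ha hb hab]
  rw [csSup_image_Iic_of_monotoneOn hmono' hx]
  ring

/-- `Γ₂(y) = Ṽ₂(y) + λy` has `x₂*` as unique global maximizer; for `x ≤ x₂*`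
the running supremum of `Γ₂` over `(−∞, x]` is attained at `x`. Consequently,
for `x ≥ x₂*` the unique maximizer of `y ↦ Ṽ₂(y) − c − λ(x − y)` over `y ≤ x`
is `y = x₂*`, while for `x ≤ x₂*` its supremum over `y ≤ x` equals `Ṽ₂(x) − c`. -/
theorem stmt_9 (ρ σ lam lamt c ct s1 s2 : ℝ) (hρ : 0 < ρ) (hσ : 0 < σ)
    (h1 : 0 < 1 - lam * ρ) (h2 : lamt ≤ lam) (h3 : 0 ≤ lamt)
    (h4 : ct ≤ c) (h5 : 0 ≤ ct) (h6 : 0 < c)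
    (h7 : (c, lam) ≠ (ct, lamt)) (h8 : s1 < s2)
    (A11 A12 A21 A22 xb1 xb2 xs1 xs2 : ℝ)
    (hS : SystemS ρ σ lam lamt c ct s1 s2 A11 A12 A21 A22 xb1 xb2 xs1 xs2)
    (hA21 : 0 < A21) (hA22 : A22 < 0)
    (Γ₂ : ℝ → ℝ)
    (hΓ₂ : ∀ y : ℝ, Γ₂ y = V2t ρ σ lam lamt c ct s2 A21 A22 xb1 xb2 xs1 xs2 y
      + lam * y) :
    (∀ y : ℝ, y ≠ xs2 → Γ₂ y < Γ₂ xs2) ∧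
    (∀ x : ℝ, x ≤ xs2 → sSup (Γ₂ '' Set.Iic x) = Γ₂ x) ∧
    (∀ x : ℝ, xs2 ≤ x → ∀ y : ℝ, y ≤ x → y ≠ xs2 →
      V2t ρ σ lam lamt c ct s2 A21 A22 xb1 xb2 xs1 xs2 y - c - lam * (x - y)
        < V2t ρ σ lam lamt c ct s2 A21 A22 xb1 xb2 xs1 xs2 xs2 - c
          - lam * (x - xs2)) ∧
    (∀ x : ℝ, x ≤ xs2 →
      sSup ((fun y => V2t ρ σ lam lamt c ct s2 A21 A22 xb1 xb2 xs1 xs2 y - c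
        - lam * (x - y)) '' Set.Iic x)
        = V2t ρ σ lam lamt c ct s2 A21 A22 xb1 xb2 xs1 xs2 x - c) :=
  stmt_9_general ρ σ lam lamt c ct s1 s2 hρ hσ h2 h6 A11 A12 A21 A22 xb1 xb2 xs1 xs2 hS hA21 Γ₂ hΓ₂
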